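/- arXiv:2102.10926 — 6 statements merged into one kernel-verified Lean document; each statement's English description precedes it below -/
import Mathlib

section
/- Let A, A', B, B' be nonempty finite types, let 𝓔 be a quantum channel from A' × B' to A × B, and let 𝓕 be a quantum channel from A' to A. Then 𝓕 is a marginal of 𝓔 on A|A' — i.e. for every quantum state ρ on A' × B' one has 𝓕 (tr_{B'} ρ) = tr_B (𝓔 ρ) — if and only if the partial trace of the Choi matrix J(𝓔) over the output factor B equals, after the canonical reindexing A × (A' × B') ≃ (A × A') × B', the matrix J(𝓕) ⊗ ((1 / (Fintype.card B' : ℂ)) • (1 : Matrix B' B' ℂ)). -/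
/-! Every matrix is a linear combination of positive semidefinite ones, which are multiples of
states (or zero), so the marginal condition is the identity `𝓕 ∘ tr_{B'} = tr_B ∘ 𝓔` of linear
maps. The Choi map is injective, and up to the reindexing `A × (A' × B') ≃ (A × A') × B'` the two
sides of the Choi identity are the Choi matrices of these two composites. -/

open Matrix Kronecker
open scoped ComplexOrder

noncomputable section

/-- A quantum state: positive semidefinite with unit trace. -/
def IsState {n : Type*} [Fintype n] (ρ : Matrix n n ℂ) : Prop :=
  ρ.PosSemidef ∧ ρ.trace = 1

/-- The Choi matrix of a linear map on matrices. -/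
def choi {n m : Type*} [Fintype n] [DecidableEq n]
    (𝓔 : Matrix n n ℂ →ₗ[ℂ] Matrix m m ℂ) : Matrix (m × n) (m × n) ℂ :=
  Matrix.of fun p q =>
    (1 / (Fintype.card n : ℂ)) * 𝓔 (Matrix.single p.2 q.2 1) p.1 q.1

/-- A quantum channel: trace preserving and completely positive. -/
def IsChannel {n m : Type*} [Fintype n] [DecidableEq n] [Fintype m]
    (𝓔 : Matrix n n ℂ →ₗ[ℂ] Matrix m m ℂ) : Prop :=
  (∀ ρ : Matrix n n ℂ, (𝓔 ρ).trace = ρ.trace) ∧ (choi 𝓔).PosSemidef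

/-- Partial trace over the second (right) factor. -/
def trR {a b : Type*} [Fintype b] (M : Matrix (a × b) (a × b) ℂ) : Matrix a a ℂ :=
  Matrix.of fun i j => ∑ k, M (i, k) (j, k)

/-- Partial trace over the first (left) factor. -/
def trL {a b : Type*} [Fintype a] (M : Matrix (a × b) (a × b) ℂ) : Matrix b b ℂ :=
  Matrix.of fun i j => ∑ k, M (k, i) (k, j)

/-- Partial trace over the third factor of a triple product. -/
def trC3 {a b c : Type*} [Fintype c] (M : Matrix (a × b × c) (a × b × c) ℂ) :
    Matrix (a × b) (a × b) ℂ :=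
  Matrix.of fun i j => ∑ k, M (i.1, i.2, k) (j.1, j.2, k)

/-- Partial trace over the output factor `B` of a Choi-type matrix, composed with the
canonical reindexing `A × (A' × B') ≃ (A × A') × B'`. -/
def trOutB {A B A' B' : Type*} [Fintype B]
    (M : Matrix ((A × B) × (A' × B')) ((A × B) × (A' × B')) ℂ) :
    Matrix ((A × A') × B') ((A × A') × B') ℂ :=
  Matrix.of fun i j => ∑ k, M ((i.1.1, k), (i.1.2, i.2)) ((j.1.1, k), (j.1.2, j.2))

-- The C⋆-algebra structure (L2 operator norm) only serves to invoke `CStarAlgebra.span_nonneg`.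
open scoped MatrixOrder Matrix.Norms.L2Operator

def trRLinearMap {a b : Type*} [Fintype b] : Matrix (a × b) (a × b) ℂ →ₗ[ℂ] Matrix a a ℂ where
  toFun := trR
  map_add' M N := by ext i j; simp [trR, Finset.sum_add_distrib]
  map_smul' c M := by ext i j; simp [trR, Finset.mul_sum]

lemma trR_single {a b : Type*} [Fintype b] [DecidableEq a] [DecidableEq b]
    (i j : a) (k l : b) (c : ℂ) :
    trR (single (i, k) (j, l) c) = if k = l then single i j c else 0 := by
  ext p q
  simp only [trR, of_apply, single_apply, Prod.mk.injEq]
  rw [Finset.sum_eq_single k (fun x _ hx => by grind) (by simp)]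
  split_ifs <;> simp_all

theorem LinearMap.ext_of_isState {n V : Type*} [Fintype n] [DecidableEq n]
    [AddCommGroup V] [Module ℂ V] {f g : Matrix n n ℂ →ₗ[ℂ] V}
    (h : ∀ ρ, IsState ρ → f ρ = g ρ) : f = g := by
  refine LinearMap.ext_on CStarAlgebra.span_nonneg fun P (hP_nonneg : 0 ≤ P) => ?_
  have hP := hP_nonneg.posSemidef
  by_cases htr : P.trace = 0
  · rw [(hP.trace_eq_zero_iff).1 htr, map_zero, map_zero]
  · have hρ : IsState (P.trace⁻¹ • P) :=
      ⟨hP.smul (inv_nonneg.2 hP.trace_nonneg),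
        by rw [trace_smul, smul_eq_mul, inv_mul_cancel₀ htr]⟩
    simpa [htr] using h _ hρ

theorem choi_injective {n m : Type*} [Fintype n] [DecidableEq n] [Nonempty n] :
    Function.Injective (choi : (Matrix n n ℂ →ₗ[ℂ] Matrix m m ℂ) → _) := by
  intro 𝓔 𝓕 h
  refine Matrix.ext_linearMap ℂ fun k l => LinearMap.ext_ring ?_
  ext i j
  simpa [choi, Fintype.card_ne_zero] using congr_fun (congr_fun h (i, k)) (j, l)

section Marginal

variable {A A' B B' : Type*} [Fintype A'] [DecidableEq A'] [Fintype B] [Fintype B'] [DecidableEq B']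

lemma trOutB_choi (𝓔 : Matrix (A' × B') (A' × B') ℂ →ₗ[ℂ] Matrix (A × B) (A × B) ℂ) :
    trOutB (choi 𝓔) =
      reindex (Equiv.prodAssoc A A' B').symm (Equiv.prodAssoc A A' B').symm
        (choi (trRLinearMap ∘ₗ 𝓔)) := by
  ext ⟨⟨a, a'⟩, b'⟩ ⟨⟨c, c'⟩, d'⟩
  simp [trOutB, choi, trRLinearMap, trR, Finset.mul_sum]

lemma choi_comp_trRLinearMap (𝓕 : Matrix A' A' ℂ →ₗ[ℂ] Matrix A A ℂ) :
    reindex (Equiv.prodAssoc A A' B').symm (Equiv.prodAssoc A A' B').symm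
        (choi (𝓕 ∘ₗ trRLinearMap)) =
      choi 𝓕 ⊗ₖ ((1 / (Fintype.card B' : ℂ)) • (1 : Matrix B' B' ℂ)) := by
  ext ⟨⟨a, a'⟩, b'⟩ ⟨⟨c, c'⟩, d'⟩
  by_cases h : b' = d' <;> simp [choi, trRLinearMap, trR_single, h]
  ring

end Marginal

theorem marginal_iff_choi_general
    {A A' B B' : Type*}
    [Fintype A'] [DecidableEq A'] [Nonempty A']
    [Fintype B] [Fintype B'] [DecidableEq B'] [Nonempty B']
    (𝓔 : Matrix (A' × B') (A' × B') ℂ →ₗ[ℂ] Matrix (A × B) (A × B) ℂ)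
    (𝓕 : Matrix A' A' ℂ →ₗ[ℂ] Matrix A A ℂ) :
    (∀ ρ : Matrix (A' × B') (A' × B') ℂ, IsState ρ → 𝓕 (trR ρ) = trR (𝓔 ρ)) ↔
      trOutB (choi 𝓔) =
        choi 𝓕 ⊗ₖ ((1 / (Fintype.card B' : ℂ)) • (1 : Matrix B' B' ℂ)) := by
  have marginal_iff_comp_eq :
      (∀ ρ, IsState ρ → 𝓕 (trR ρ) = trR (𝓔 ρ)) ↔ 𝓕 ∘ₗ trRLinearMap = trRLinearMap ∘ₗ 𝓔 :=
    ⟨fun h => LinearMap.ext_of_isState h, fun h ρ _ => LinearMap.congr_fun h ρ⟩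
  rw [marginal_iff_comp_eq, trOutB_choi, ← choi_comp_trRLinearMap, EmbeddingLike.apply_eq_iff_eq,
    choi_injective.eq_iff, eq_comm]

/-- A channel `𝓕` is the marginal of `𝓔` on `A|A'` iff the partial trace of the Choi
matrix of `𝓔` over the output factor `B` equals `J(𝓕) ⊗ (𝟙/d_{B'})`. -/
theorem marginal_iff_choi
    {A A' B B' : Type*}
    [Fintype A] [DecidableEq A] [Nonempty A] [Fintype A'] [DecidableEq A'] [Nonempty A']
    [Fintype B] [DecidableEq B] [Nonempty B] [Fintype B'] [DecidableEq B'] [Nonempty B']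
    (𝓔 : Matrix (A' × B') (A' × B') ℂ →ₗ[ℂ] Matrix (A × B) (A × B) ℂ)
    (𝓕 : Matrix A' A' ℂ →ₗ[ℂ] Matrix A A ℂ)
    (h𝓔 : IsChannel 𝓔) (h𝓕 : IsChannel 𝓕) :
    (∀ ρ : Matrix (A' × B') (A' × B') ℂ, IsState ρ → 𝓕 (trR ρ) = trR (𝓔 ρ)) ↔
      trOutB (choi 𝓔) =
        choi 𝓕 ⊗ₖ ((1 / (Fintype.card B' : ℂ)) • (1 : Matrix B' B' ℂ)) :=
  marginal_iff_choi_general 𝓔 𝓕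
end
end

section
/- Let A, A', B, B', C, C' be nonempty finite types, and let 𝓔₁ (a channel from A' × B' to A × B) and 𝓔₂ (a channel from B' × C' to B × C) be compatible. Then 𝓔₁ and 𝓔₂ are locally compatible: there exists a quantum channel 𝓖 from B' to B such that for every quantum state σ on A' × B', 𝓖 (tr_{A'} σ) = tr_A (𝓔₁ σ), and for every quantum state τ on B' × C', 𝓖 (tr_{C'} τ) = tr_C (𝓔₂ τ). -/
/-!
Both `tr_A ∘ 𝓔₁ ∘ tr_{C'}` and `tr_C ∘ 𝓔₂ ∘ tr_{A'}` compute `tr_{AC} ∘ 𝓔` on states of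
`A' × B' × C'`, so they agree there. Take `𝓖 X = tr_A (𝓔₁ (ν_{A'} ⊗ X))` with `ν` the maximally
mixed state. Evaluating the identity at `ν_{A'} ⊗ τ` gives `𝓖 (tr_{C'} τ) = tr_C (𝓔₂ τ)`; evaluating
it at `σ ⊗ ν_{C'}` gives `tr_A (𝓔₁ σ) = tr_C (𝓔₂ (tr_{A'} σ ⊗ ν_{C'}))`, which by the first
equation is `𝓖 (tr_{A'} σ)`. The Choi matrix of `𝓖` is a partial trace of a reindexed Choi matrix
of `𝓔₁`, hence positive semidefinite.
-/

open Matrix Kronecker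
open scoped ComplexOrder

noncomputable section

/-- Compatibility of two local channels with a single global channel. -/
def Compatible {A A' B B' C C' : Type*}
    [Fintype A] [Fintype A'] [Fintype B] [Fintype B'] [Fintype C] [Fintype C']
    [DecidableEq A'] [DecidableEq B'] [DecidableEq C']
    (𝓔₁ : Matrix (A' × B') (A' × B') ℂ →ₗ[ℂ] Matrix (A × B) (A × B) ℂ)
    (𝓔₂ : Matrix (B' × C') (B' × C') ℂ →ₗ[ℂ] Matrix (B × C) (B × C) ℂ) : Prop :=
  ∃ 𝓔 : Matrix (A' × B' × C') (A' × B' × C') ℂ →ₗ[ℂ] Matrix (A × B × C) (A × B × C) ℂ,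
    IsChannel 𝓔 ∧ ∀ ρ : Matrix (A' × B' × C') (A' × B' × C') ℂ, IsState ρ →
      trC3 (𝓔 ρ) = 𝓔₁ (trC3 ρ) ∧ trL (𝓔 ρ) = 𝓔₂ (trL ρ)

def maximallyMixed (n : Type*) [Fintype n] [DecidableEq n] : Matrix n n ℂ :=
  (Fintype.card n : ℂ)⁻¹ • 1

lemma isState_maximallyMixed (n : Type*) [Fintype n] [DecidableEq n] [Nonempty n] :
    IsState (maximallyMixed n) := by
  refine ⟨PosSemidef.one.smul (by positivity), ?_⟩
  have : (Fintype.card n : ℂ) ≠ 0 := Nat.cast_ne_zero.mpr Fintype.card_ne_zero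
  simp [maximallyMixed, this]

section States

variable {n m : Type*} [Fintype n] [Fintype m]

lemma IsState.kronecker {ρ : Matrix n n ℂ} {σ : Matrix m m ℂ} (hρ : IsState ρ)
    (hσ : IsState σ) : IsState (ρ ⊗ₖ σ) :=
  ⟨hρ.1.kronecker hσ.1, by rw [trace_kronecker, hρ.2, hσ.2, one_mul]⟩

lemma IsState.reindex {ρ : Matrix n n ℂ} (hρ : IsState ρ) (e : n ≃ m) :
    IsState (reindex e e ρ) :=
  ⟨hρ.1.submatrix _, (Fintype.sum_equiv e.symm _ _ fun _ => rfl).trans hρ.2⟩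

end States

section PartialTrace

variable {a b c : Type*}

lemma trL_eq_sum_submatrix [Fintype a] (M : Matrix (a × b) (a × b) ℂ) :
    trL M = ∑ k, M.submatrix (Prod.mk k) (Prod.mk k) := by
  ext i j
  simp [trL, Matrix.sum_apply]

lemma posSemidef_trL [Fintype a] {M : Matrix (a × b) (a × b) ℂ} (hM : M.PosSemidef) :
    (trL M).PosSemidef := by
  rw [trL_eq_sum_submatrix]
  exact posSemidef_sum _ fun k _ => hM.submatrix _

lemma trace_trL [Fintype a] [Fintype b] (M : Matrix (a × b) (a × b) ℂ) :
    (trL M).trace = M.trace := by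
  simp only [trL, trace, diag, of_apply, Fintype.sum_prod_type]
  exact Finset.sum_comm

lemma IsState.trL [Fintype a] [Fintype b] {M : Matrix (a × b) (a × b) ℂ} (hM : IsState M) :
    IsState (trL M) :=
  ⟨posSemidef_trL hM.1, (trace_trL M).trans hM.2⟩

lemma trL_trC3 [Fintype a] [Fintype c] (M : Matrix (a × b × c) (a × b × c) ℂ) :
    trL (trC3 M) = trR (trL M) := by
  ext i j
  exact Finset.sum_comm

lemma trL_kronecker [Fintype a] (M : Matrix a a ℂ) (X : Matrix b b ℂ) :
    trL (M ⊗ₖ X) = M.trace • X := by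
  ext i j
  simp [trL, trace, Finset.sum_mul]

lemma trR_kronecker [Fintype b] (X : Matrix a a ℂ) (M : Matrix b b ℂ) :
    trR (X ⊗ₖ M) = M.trace • X := by
  ext i j
  simp [trR, trace, Finset.mul_sum, mul_comm]

lemma trC3_kronecker [Fintype c] (M : Matrix a a ℂ) (X : Matrix (b × c) (b × c) ℂ) :
    trC3 (M ⊗ₖ X) = M ⊗ₖ trR X := by
  ext i j
  simp [trC3, trR, Finset.mul_sum]

lemma trL_reindex_kronecker [Fintype a] (σ : Matrix (a × b) (a × b) ℂ) (N : Matrix c c ℂ) :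
    trL (reindex (Equiv.prodAssoc a b c) (Equiv.prodAssoc a b c) (σ ⊗ₖ N)) = trL σ ⊗ₖ N := by
  ext i j
  simp [trL, Finset.sum_mul]

lemma trC3_reindex_kronecker [Fintype c] (σ : Matrix (a × b) (a × b) ℂ) (N : Matrix c c ℂ) :
    trC3 (reindex (Equiv.prodAssoc a b c) (Equiv.prodAssoc a b c) (σ ⊗ₖ N)) = N.trace • σ := by
  ext i j
  simp [trC3, trace, Finset.mul_sum, mul_comm]

def trLLinearMap (a b : Type*) [Fintype a] :
    Matrix (a × b) (a × b) ℂ →ₗ[ℂ] Matrix b b ℂ where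
  toFun := trL
  map_add' M N := by ext i j; simp [trL, Finset.sum_add_distrib]
  map_smul' r M := by ext i j; simp [trL, Finset.mul_sum]

end PartialTrace

section Choi

variable {a b m n : Type*}

lemma choi_trLLinearMap_comp [Fintype a] [Fintype n] [DecidableEq n]
    (Φ : Matrix n n ℂ →ₗ[ℂ] Matrix (a × b) (a × b) ℂ) :
    choi (trLLinearMap a b ∘ₗ Φ) =
      trL (reindex (Equiv.prodAssoc a b n) (Equiv.prodAssoc a b n) (choi Φ)) := by
  ext ⟨i, k⟩ ⟨j, l⟩
  simp [choi, trLLinearMap, trL, Finset.mul_sum]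

lemma one_kronecker_single [Fintype a] [DecidableEq a] [DecidableEq n] (k l : n) :
    (1 : Matrix a a ℂ) ⊗ₖ single k l 1 = ∑ x, single (x, k) (x, l) 1 := by
  calc (1 : Matrix a a ℂ) ⊗ₖ single k l 1
      = kroneckerBilinear (R := ℂ) (∑ x : a, single x x 1) (single k l 1) := by
        rw [sum_single_one]; rfl
    _ = ∑ x, single (x, k) (x, l) 1 := by
        simp [kroneckerBilinear, single_kronecker_single]

lemma choi_comp_kronecker_maximallyMixed [Fintype a] [DecidableEq a] [Fintype n] [DecidableEq n]
    (Ψ : Matrix (a × n) (a × n) ℂ →ₗ[ℂ] Matrix m m ℂ) :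
    choi (Ψ ∘ₗ kroneckerBilinear (R := ℂ) (maximallyMixed a)) =
      trL ((choi Ψ).submatrix (fun p => (p.2.1, p.1, p.2.2)) (fun p => (p.2.1, p.1, p.2.2))) := by
  ext ⟨i, k⟩ ⟨j, l⟩
  have h_input : kroneckerBilinear (R := ℂ) (maximallyMixed a) (single k l 1) =
      (Fintype.card a : ℂ)⁻¹ • ∑ x, single (x, k) (x, l) 1 := by
    rw [← one_kronecker_single]
    exact smul_kronecker _ _ _
  simp [choi, trL, h_input, Finset.mul_sum, Matrix.sum_apply, mul_assoc]

end Choi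

section Marginal

variable {A A' B B' : Type*} [Fintype A] [Fintype A'] [DecidableEq A']

def marginalMap (𝓔 : Matrix (A' × B') (A' × B') ℂ →ₗ[ℂ] Matrix (A × B) (A × B) ℂ) :
    Matrix B' B' ℂ →ₗ[ℂ] Matrix B B ℂ :=
  trLLinearMap A B ∘ₗ 𝓔 ∘ₗ kroneckerBilinear (R := ℂ) (maximallyMixed A')

lemma marginalMap_apply (𝓔 : Matrix (A' × B') (A' × B') ℂ →ₗ[ℂ] Matrix (A × B) (A × B) ℂ)
    (X : Matrix B' B' ℂ) : marginalMap 𝓔 X = trL (𝓔 (maximallyMixed A' ⊗ₖ X)) :=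
  rfl

lemma IsChannel.marginalMap [Nonempty A'] [Fintype B] [Fintype B'] [DecidableEq B']
    {𝓔 : Matrix (A' × B') (A' × B') ℂ →ₗ[ℂ] Matrix (A × B) (A × B) ℂ} (h : IsChannel 𝓔) :
    IsChannel (marginalMap 𝓔) := by
  refine ⟨fun X => ?_, ?_⟩
  · rw [marginalMap_apply, trace_trL, h.1, trace_kronecker,
      (isState_maximallyMixed A').2, one_mul]
  · rw [_root_.marginalMap, choi_trLLinearMap_comp, choi_comp_kronecker_maximallyMixed,
      reindex_apply]
    exact posSemidef_trL ((posSemidef_trL (h.2.submatrix _)).submatrix _)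

end Marginal

lemma Compatible.trL_trC3_eq_trR_trL {A A' B B' C C' : Type*}
    [Fintype A] [Fintype A'] [Fintype B] [Fintype B'] [Fintype C] [Fintype C']
    [DecidableEq A'] [DecidableEq B'] [DecidableEq C']
    {𝓔₁ : Matrix (A' × B') (A' × B') ℂ →ₗ[ℂ] Matrix (A × B) (A × B) ℂ}
    {𝓔₂ : Matrix (B' × C') (B' × C') ℂ →ₗ[ℂ] Matrix (B × C) (B × C) ℂ}
    (hcomp : Compatible 𝓔₁ 𝓔₂) {ρ : Matrix (A' × B' × C') (A' × B' × C') ℂ} (hρ : IsState ρ) :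
    trL (𝓔₁ (trC3 ρ)) = trR (𝓔₂ (trL ρ)) := by
  obtain ⟨𝓔, -, hmarg⟩ := hcomp
  rw [← (hmarg ρ hρ).1, ← (hmarg ρ hρ).2, trL_trC3]

theorem compatible_implies_locally_compatible_general
    {A A' B B' C C' : Type*}
    [Fintype A] [Fintype A'] [DecidableEq A'] [Nonempty A']
    [Fintype B] [Fintype B'] [DecidableEq B']
    [Fintype C] [Fintype C'] [DecidableEq C'] [Nonempty C']
    (𝓔₁ : Matrix (A' × B') (A' × B') ℂ →ₗ[ℂ] Matrix (A × B) (A × B) ℂ)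
    (𝓔₂ : Matrix (B' × C') (B' × C') ℂ →ₗ[ℂ] Matrix (B × C) (B × C) ℂ)
    (h₁ : IsChannel 𝓔₁)
    (hcomp : Compatible 𝓔₁ 𝓔₂) :
    ∃ 𝓖 : Matrix B' B' ℂ →ₗ[ℂ] Matrix B B ℂ, IsChannel 𝓖 ∧
      (∀ σ : Matrix (A' × B') (A' × B') ℂ, IsState σ → 𝓖 (trL σ) = trL (𝓔₁ σ)) ∧
      (∀ τ : Matrix (B' × C') (B' × C') ℂ, IsState τ → 𝓖 (trR τ) = trR (𝓔₂ τ)) := by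
  have hνA' := isState_maximallyMixed A'
  have hνC' := isState_maximallyMixed C'
  have h_right : ∀ τ : Matrix (B' × C') (B' × C') ℂ, IsState τ →
      marginalMap 𝓔₁ (trR τ) = trR (𝓔₂ τ) := fun τ hτ => by
    simpa [marginalMap_apply, trC3_kronecker, trL_kronecker, hνA'.2] using
      hcomp.trL_trC3_eq_trR_trL (hνA'.kronecker hτ)
  refine ⟨marginalMap 𝓔₁, h₁.marginalMap, fun σ hσ => ?_, h_right⟩
  have h_left :=
    hcomp.trL_trC3_eq_trR_trL ((hσ.kronecker hνC').reindex (Equiv.prodAssoc A' B' C'))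
  rw [trC3_reindex_kronecker, trL_reindex_kronecker, hνC'.2, one_smul] at h_left
  rw [h_left, ← h_right _ (hσ.trL.kronecker hνC'), trR_kronecker, hνC'.2, one_smul]

/-- Compatible channels are locally compatible: they share a common marginal channel
from `B'` to `B`. -/
theorem compatible_implies_locally_compatible
    {A A' B B' C C' : Type*}
    [Fintype A] [DecidableEq A] [Nonempty A] [Fintype A'] [DecidableEq A'] [Nonempty A']
    [Fintype B] [DecidableEq B] [Nonempty B] [Fintype B'] [DecidableEq B'] [Nonempty B']
    [Fintype C] [DecidableEq C] [Nonempty C] [Fintype C'] [DecidableEq C'] [Nonempty C']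
    (𝓔₁ : Matrix (A' × B') (A' × B') ℂ →ₗ[ℂ] Matrix (A × B) (A × B) ℂ)
    (𝓔₂ : Matrix (B' × C') (B' × C') ℂ →ₗ[ℂ] Matrix (B × C) (B × C) ℂ)
    (h₁ : IsChannel 𝓔₁) (h₂ : IsChannel 𝓔₂)
    (hcomp : Compatible 𝓔₁ 𝓔₂) :
    ∃ 𝓖 : Matrix B' B' ℂ →ₗ[ℂ] Matrix B B ℂ, IsChannel 𝓖 ∧
      (∀ σ : Matrix (A' × B') (A' × B') ℂ, IsState σ → 𝓖 (trL σ) = trL (𝓔₁ σ)) ∧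
      (∀ τ : Matrix (B' × C') (B' × C') ℂ, IsState τ → 𝓖 (trR τ) = trR (𝓔₂ τ)) :=
  compatible_implies_locally_compatible_general 𝓔₁ 𝓔₂ h₁ hcomp
end
end

section
/- Let A, A', B, B', C, C' be nonempty finite types, 𝓔₁ a channel from A' × B' to A × B, and 𝓔₂ a channel from B' × C' to B × C. The following are equivalent. (1) There exist N : ℕ, Hermitian matrices H₁ : Fin N → Matrix (A × B) (A × B) ℂ and H₂ : Fin N → Matrix (B × C) (B × C) ℂ, and quantum states ρ₁ : Fin N → Matrix (A' × B') (A' × B') ℂ and ρ₂ : Fin N → Matrix (B' × C') (B' × C') ℂ such that for every compatible pair of channels (𝓛₁, 𝓛₂): ∑ i, (trace (H₁ i * 𝓛₁ (ρ₁ i))).re + ∑ i, (trace (H₂ i * 𝓛₂ (ρ₂ i))).re < ∑ i, (trace (H₁ i * 𝓔₁ (ρ₁ i))).re + ∑ i, (trace (H₂ i * 𝓔₂ (ρ₂ i))).re. (2) There exists a strictly positive ensemble state discrimination task D — reals p₁, p₂ > 0 with p₁ + p₂ = 1; nonempty finite index types ι₁, ι₂; weights q₁ : ι₁ → ℝ,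 q₂ : ι₂ → ℝ with all values positive and summing to 1; states ρ₁ : ι₁ → Matrix (A' × B') (A' × B') ℂ, ρ₂ : ι₂ → Matrix (B' × C') (B' × C') ℂ; POVMs M₁ : ι₁ → Matrix (A × B) (A × B) ℂ, M₂ : ι₂ → Matrix (B × C) (B × C) ℂ with each element positive definite and summing to the identity — such that P(D, 𝓛₁, 𝓛₂) < P(D, 𝓔₁, 𝓔₂) for every compatible pair (𝓛₁, 𝓛₂), where P(D, 𝓝₁, 𝓝₂) := p₁ * ∑ i, q₁ i * (trace (M₁ i * 𝓝₁ (ρ₁ i))).re + p₂ * ∑ j, q₂ j * (trace (M₂ j * 𝓝₂ (ρ₂ j))).re. -/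
open Matrix Kronecker
open scoped ComplexOrder

noncomputable section

/-!
From a task, weighting each POVM element by its prior turns the success probability into the
value of a Hermitian witness; the two ensembles are merged into one index set by padding with zero
observables.

Conversely, pad the witness `(Hᵢ, ρᵢ)` so that it has `N > 0` entries and pick `c` above every
operator norm `‖Hᵢ‖`. Then the `2N` operators `α (c + Hᵢ)` and `α (c - Hᵢ)`, `α = (2Nc)⁻¹`, are
positive definite and sum to the identity. Assigning both the state `ρᵢ`, with priors `2/(3N)` and
`1/(3N)` respectively, the success probability under any trace-preserving `𝓛` is
`1/(2N) + (6N²c)⁻¹ ∑ᵢ Re tr (Hᵢ 𝓛(ρᵢ))`, an increasing affine function of the witness value.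
-/

section WitnessValue

variable {m n ι : Type*} [Fintype m] [Fintype ι]

def witnessValue (H : ι → Matrix m m ℂ) (ρ : ι → Matrix n n ℂ)
    (𝓛 : Matrix n n ℂ →ₗ[ℂ] Matrix m m ℂ) : ℝ :=
  ∑ i, ((H i * 𝓛 (ρ i)).trace).re

lemma witnessValue_real_smul (p : ℝ) (q : ι → ℝ) (M : ι → Matrix m m ℂ)
    (ρ : ι → Matrix n n ℂ) (𝓛 : Matrix n n ℂ →ₗ[ℂ] Matrix m m ℂ) :
    witnessValue (fun i => (p * q i) • M i) ρ 𝓛 = p * ∑ i, q i * ((M i * 𝓛 (ρ i)).trace).re := by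
  simp [witnessValue, Finset.mul_sum, mul_assoc]

lemma witnessValue_append_zero {k l : ℕ} (H : Fin k → Matrix m m ℂ) (ρ : Fin k → Matrix n n ℂ)
    (σ : Fin l → Matrix n n ℂ) (𝓛 : Matrix n n ℂ →ₗ[ℂ] Matrix m m ℂ) :
    witnessValue (Fin.append H 0) (Fin.append ρ σ) 𝓛 = witnessValue H ρ 𝓛 := by
  simp [witnessValue, Fin.sum_univ_add]

lemma witnessValue_zero_append {k l : ℕ} (H : Fin l → Matrix m m ℂ) (ρ : Fin l → Matrix n n ℂ)
    (σ : Fin k → Matrix n n ℂ) (𝓛 : Matrix n n ℂ →ₗ[ℂ] Matrix m m ℂ) :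
    witnessValue (Fin.append 0 H) (Fin.append σ ρ) 𝓛 = witnessValue H ρ 𝓛 := by
  simp [witnessValue, Fin.sum_univ_add]

end WitnessValue

lemma exists_isState (n : Type*) [Fintype n] [DecidableEq n] [Nonempty n] :
    ∃ ρ : Matrix n n ℂ, IsState ρ := by
  refine ⟨(Fintype.card n : ℝ)⁻¹ • 1, PosSemidef.one.smul (by positivity), ?_⟩
  simp [trace_smul, Fintype.card_ne_zero]

lemma IsChannel.trace_apply_of_isState {n m : Type*} [Fintype n] [DecidableEq n] [Fintype m]
    {𝓔 : Matrix n n ℂ →ₗ[ℂ] Matrix m m ℂ} (h𝓔 : IsChannel 𝓔) {ρ : Matrix n n ℂ}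
    (hρ : IsState ρ) : (𝓔 ρ).trace = 1 :=
  (h𝓔.1 ρ).trans hρ.2

section ShiftedPOVM

open scoped MatrixOrder Matrix.Norms.L2Operator

variable {m : Type*} [DecidableEq m]

lemma posDef_smul_one_add [Fintype m] {H : Matrix m m ℂ} (hH : H.IsHermitian) {c : ℝ}
    (hc : ‖H‖ < c) :
    (c • (1 : Matrix m m ℂ) + H).PosDef := by
  have hle : (‖H‖ • (1 : Matrix m m ℂ) + H).PosSemidef := by
    have := hH.isSelfAdjoint.neg.le_algebraMap_norm_self
    rwa [le_iff, norm_neg, Algebra.algebraMap_eq_smul_one, sub_neg_eq_add] at this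
  have hsplit : c • (1 : Matrix m m ℂ) + H = (c - ‖H‖) • 1 + (‖H‖ • 1 + H) := by module
  rw [hsplit]
  exact (PosDef.one.smul (sub_pos.2 hc)).add_posSemidef hle

def biasedWeights (M : ℕ) : Fin (M + M) → ℝ :=
  Fin.append (fun _ => 2 / (3 * M : ℝ)) (fun _ => 1 / (3 * M : ℝ))

def shiftedPOVM (M : ℕ) (c : ℝ) (G : Fin M → Matrix m m ℂ) : Fin (M + M) → Matrix m m ℂ :=
  Fin.append (fun i => (2 * M * c : ℝ)⁻¹ • (c • 1 + G i))
    (fun i => (2 * M * c : ℝ)⁻¹ • (c • 1 - G i))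

lemma biasedWeights_pos {M : ℕ} (hM : 0 < M) (k : Fin (M + M)) : 0 < biasedWeights M k := by
  revert k
  rw [Fin.forall_fin_add]
  constructor <;> intro i <;>
    simp only [biasedWeights, Fin.append_left, Fin.append_right] <;> positivity

lemma sum_biasedWeights {M : ℕ} (hM : 0 < M) : ∑ k, biasedWeights M k = 1 := by
  simp only [biasedWeights, Fin.sum_univ_add, Fin.append_left, Fin.append_right,
    Finset.sum_const, Finset.card_univ, Fintype.card_fin, nsmul_eq_mul]
  field_simp
  ring

lemma shiftedPOVM_posDef [Fintype m] {M : ℕ} {c : ℝ} {G : Fin M → Matrix m m ℂ}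
    (hG : ∀ i, (G i).IsHermitian) (hc : ∀ i, ‖G i‖ < c) (k : Fin (M + M)) :
    (shiftedPOVM M c G k).PosDef := by
  have hα : ∀ i : Fin M, 0 < (2 * M * c : ℝ)⁻¹ := fun i => by
    have := i.pos
    have := (norm_nonneg (G i)).trans_lt (hc i)
    positivity
  revert k
  rw [Fin.forall_fin_add]
  refine ⟨fun i => ?_, fun i => ?_⟩ <;> simp only [shiftedPOVM, Fin.append_left, Fin.append_right]
  · exact (posDef_smul_one_add (hG i) (hc i)).smul (hα i)
  · rw [sub_eq_add_neg]
    exact (posDef_smul_one_add (hG i).neg ((norm_neg _).trans_lt (hc i))).smul (hα i)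

lemma sum_shiftedPOVM {M : ℕ} (hM : 0 < M) {c : ℝ} (hc : 0 < c) (G : Fin M → Matrix m m ℂ) :
    ∑ k, shiftedPOVM M c G k = 1 := by
  have hpair : ∀ i, (c • 1 + G i) + (c • 1 - G i) = (2 * c) • (1 : Matrix m m ℂ) := fun i => by
    module
  simp only [shiftedPOVM, Fin.sum_univ_add, Fin.append_left, Fin.append_right, ← Finset.smul_sum,
    ← smul_add, ← Finset.sum_add_distrib, hpair, Finset.sum_const, Finset.card_univ,
    Fintype.card_fin, ← Nat.cast_smul_eq_nsmul ℝ, smul_smul]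
  rw [← one_smul ℝ (1 : Matrix m m ℂ), smul_smul]
  congr 1
  field_simp

lemma sum_biasedWeights_mul_shiftedPOVM [Fintype m] {n : Type*} [Fintype n] {M : ℕ} (hM : 0 < M)
    {c : ℝ} (hc : 0 < c) (G : Fin M → Matrix m m ℂ) (ρ : Fin M → Matrix n n ℂ)
    (𝓛 : Matrix n n ℂ →ₗ[ℂ] Matrix m m ℂ) (h𝓛 : ∀ i, (𝓛 (ρ i)).trace = 1) :
    ∑ k, biasedWeights M k * ((shiftedPOVM M c G k * 𝓛 (Fin.append ρ ρ k)).trace).re =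
      (2 * M : ℝ)⁻¹ + (6 * M ^ 2 * c : ℝ)⁻¹ * witnessValue G ρ 𝓛 := by
  have hterm : ∀ i, 2 / (3 * M : ℝ) * (((2 * M * c : ℝ)⁻¹ • (c • 1 + G i) * 𝓛 (ρ i)).trace).re +
      1 / (3 * M : ℝ) * (((2 * M * c : ℝ)⁻¹ • (c • 1 - G i) * 𝓛 (ρ i)).trace).re =
      (2 * M ^ 2 : ℝ)⁻¹ + (6 * M ^ 2 * c : ℝ)⁻¹ * ((G i * 𝓛 (ρ i)).trace).re := fun i => by
    simp [add_mul, sub_mul, trace_add, trace_sub, trace_smul, h𝓛 i]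
    field_simp
    ring
  rw [Fin.sum_univ_add, ← Finset.sum_add_distrib]
  simp only [biasedWeights, shiftedPOVM, Fin.append_left, Fin.append_right, hterm,
    Finset.sum_add_distrib, ← Finset.mul_sum, Finset.sum_const, Finset.card_univ, Fintype.card_fin,
    nsmul_eq_mul, witnessValue]
  field_simp

end ShiftedPOVM

section Compatibility

variable {A A' B B' C C' : Type*} [Fintype A] [Fintype A'] [Fintype B] [Fintype B'] [Fintype C]
  [Fintype C'] [DecidableEq A'] [DecidableEq B'] [DecidableEq C']

def IsWitness {ι : Type*} [Fintype ι] (H₁ : ι → Matrix (A × B) (A × B) ℂ)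
    (H₂ : ι → Matrix (B × C) (B × C) ℂ) (ρ₁ : ι → Matrix (A' × B') (A' × B') ℂ)
    (ρ₂ : ι → Matrix (B' × C') (B' × C') ℂ)
    (𝓔₁ : Matrix (A' × B') (A' × B') ℂ →ₗ[ℂ] Matrix (A × B) (A × B) ℂ)
    (𝓔₂ : Matrix (B' × C') (B' × C') ℂ →ₗ[ℂ] Matrix (B × C) (B × C) ℂ) : Prop :=
  (∀ i, (H₁ i).IsHermitian) ∧ (∀ i, (H₂ i).IsHermitian) ∧
    (∀ i, IsState (ρ₁ i)) ∧ (∀ i, IsState (ρ₂ i)) ∧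
    ∀ (𝓛₁ : Matrix (A' × B') (A' × B') ℂ →ₗ[ℂ] Matrix (A × B) (A × B) ℂ)
      (𝓛₂ : Matrix (B' × C') (B' × C') ℂ →ₗ[ℂ] Matrix (B × C) (B × C) ℂ),
      IsChannel 𝓛₁ → IsChannel 𝓛₂ → Compatible 𝓛₁ 𝓛₂ →
      witnessValue H₁ ρ₁ 𝓛₁ + witnessValue H₂ ρ₂ 𝓛₂ < witnessValue H₁ ρ₁ 𝓔₁ + witnessValue H₂ ρ₂ 𝓔₂

def successProbability {n₁ n₂ : ℕ} (p₁ p₂ : ℝ) (q₁ : Fin n₁ → ℝ) (q₂ : Fin n₂ → ℝ)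
    (ρ₁ : Fin n₁ → Matrix (A' × B') (A' × B') ℂ) (ρ₂ : Fin n₂ → Matrix (B' × C') (B' × C') ℂ)
    (M₁ : Fin n₁ → Matrix (A × B) (A × B) ℂ) (M₂ : Fin n₂ → Matrix (B × C) (B × C) ℂ)
    (𝓝₁ : Matrix (A' × B') (A' × B') ℂ →ₗ[ℂ] Matrix (A × B) (A × B) ℂ)
    (𝓝₂ : Matrix (B' × C') (B' × C') ℂ →ₗ[ℂ] Matrix (B × C) (B × C) ℂ) : ℝ :=
  p₁ * (∑ i, q₁ i * ((M₁ i * 𝓝₁ (ρ₁ i)).trace).re) +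
    p₂ * (∑ j, q₂ j * ((M₂ j * 𝓝₂ (ρ₂ j)).trace).re)

def HasDiscriminationTask [DecidableEq A] [DecidableEq B] [DecidableEq C]
    (𝓔₁ : Matrix (A' × B') (A' × B') ℂ →ₗ[ℂ] Matrix (A × B) (A × B) ℂ)
    (𝓔₂ : Matrix (B' × C') (B' × C') ℂ →ₗ[ℂ] Matrix (B × C) (B × C) ℂ) : Prop :=
  ∃ (p₁ p₂ : ℝ), 0 < p₁ ∧ 0 < p₂ ∧ p₁ + p₂ = 1 ∧
    ∃ (n₁ n₂ : ℕ), 0 < n₁ ∧ 0 < n₂ ∧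
    ∃ (q₁ : Fin n₁ → ℝ) (q₂ : Fin n₂ → ℝ),
      (∀ i, 0 < q₁ i) ∧ (∀ j, 0 < q₂ j) ∧ (∑ i, q₁ i) = 1 ∧ (∑ j, q₂ j) = 1 ∧
    ∃ (ρ₁ : Fin n₁ → Matrix (A' × B') (A' × B') ℂ) (ρ₂ : Fin n₂ → Matrix (B' × C') (B' × C') ℂ),
      (∀ i, IsState (ρ₁ i)) ∧ (∀ j, IsState (ρ₂ j)) ∧
    ∃ (M₁ : Fin n₁ → Matrix (A × B) (A × B) ℂ) (M₂ : Fin n₂ → Matrix (B × C) (B × C) ℂ),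
      (∀ i, (M₁ i).PosDef) ∧ (∀ j, (M₂ j).PosDef) ∧ (∑ i, M₁ i) = 1 ∧ (∑ j, M₂ j) = 1 ∧
      ∀ (𝓛₁ : Matrix (A' × B') (A' × B') ℂ →ₗ[ℂ] Matrix (A × B) (A × B) ℂ)
        (𝓛₂ : Matrix (B' × C') (B' × C') ℂ →ₗ[ℂ] Matrix (B × C) (B × C) ℂ),
        IsChannel 𝓛₁ → IsChannel 𝓛₂ → Compatible 𝓛₁ 𝓛₂ →
        successProbability p₁ p₂ q₁ q₂ ρ₁ ρ₂ M₁ M₂ 𝓛₁ 𝓛₂ <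
          successProbability p₁ p₂ q₁ q₂ ρ₁ ρ₂ M₁ M₂ 𝓔₁ 𝓔₂

variable {𝓔₁ : Matrix (A' × B') (A' × B') ℂ →ₗ[ℂ] Matrix (A × B) (A × B) ℂ}
  {𝓔₂ : Matrix (B' × C') (B' × C') ℂ →ₗ[ℂ] Matrix (B × C) (B × C) ℂ}

lemma IsWitness.append_zero {N l : ℕ} {H₁ : Fin N → Matrix (A × B) (A × B) ℂ}
    {H₂ : Fin N → Matrix (B × C) (B × C) ℂ} {ρ₁ : Fin N → Matrix (A' × B') (A' × B') ℂ}
    {ρ₂ : Fin N → Matrix (B' × C') (B' × C') ℂ} (hW : IsWitness H₁ H₂ ρ₁ ρ₂ 𝓔₁ 𝓔₂)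
    {σ₁ : Fin l → Matrix (A' × B') (A' × B') ℂ} {σ₂ : Fin l → Matrix (B' × C') (B' × C') ℂ}
    (hσ₁ : ∀ i, IsState (σ₁ i)) (hσ₂ : ∀ i, IsState (σ₂ i)) :
    IsWitness (Fin.append H₁ 0) (Fin.append H₂ 0) (Fin.append ρ₁ σ₁) (Fin.append ρ₂ σ₂)
      𝓔₁ 𝓔₂ := by
  obtain ⟨hH₁, hH₂, hρ₁, hρ₂, hlt⟩ := hW
  simp only [IsWitness, Fin.forall_fin_add, Fin.append_left, Fin.append_right,
    witnessValue_append_zero]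
  exact ⟨⟨hH₁, fun _ => isHermitian_zero⟩, ⟨hH₂, fun _ => isHermitian_zero⟩, ⟨hρ₁, hσ₁⟩,
    ⟨hρ₂, hσ₂⟩, hlt⟩

lemma HasDiscriminationTask.exists_isWitness [DecidableEq A] [DecidableEq B] [DecidableEq C]
    (hD : HasDiscriminationTask 𝓔₁ 𝓔₂) :
    ∃ (N : ℕ) (H₁ : Fin N → Matrix (A × B) (A × B) ℂ) (H₂ : Fin N → Matrix (B × C) (B × C) ℂ)
      (ρ₁ : Fin N → Matrix (A' × B') (A' × B') ℂ) (ρ₂ : Fin N → Matrix (B' × C') (B' × C') ℂ),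
      IsWitness H₁ H₂ ρ₁ ρ₂ 𝓔₁ 𝓔₂ := by
  obtain ⟨p₁, p₂, -, -, -, n₁, n₂, hn₁, hn₂, q₁, q₂, -, -, -, -, ρ₁, ρ₂, hρ₁, hρ₂, M₁, M₂, hM₁, hM₂,
    -, -, hlt⟩ := hD
  refine ⟨n₁ + n₂, Fin.append (fun i => (p₁ * q₁ i) • M₁ i) 0,
    Fin.append 0 (fun j => (p₂ * q₂ j) • M₂ j), Fin.append ρ₁ fun _ => ρ₁ ⟨0, hn₁⟩,
    Fin.append (fun _ => ρ₂ ⟨0, hn₂⟩) ρ₂, ?_⟩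
  simp only [IsWitness, Fin.forall_fin_add, Fin.append_left, Fin.append_right,
    witnessValue_append_zero, witnessValue_zero_append, witnessValue_real_smul]
  exact ⟨⟨fun i => (hM₁ i).isHermitian.smul (.all _), fun _ => isHermitian_zero⟩,
    ⟨fun _ => isHermitian_zero, fun j => (hM₂ j).isHermitian.smul (.all _)⟩,
    ⟨hρ₁, fun _ => hρ₁ _⟩, ⟨fun _ => hρ₂ _, hρ₂⟩, hlt⟩

open scoped Matrix.Norms.L2Operator in
lemma IsWitness.hasDiscriminationTask [DecidableEq A] [DecidableEq B] [DecidableEq C] {M : ℕ}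
    (hM : 0 < M) {G₁ : Fin M → Matrix (A × B) (A × B) ℂ} {G₂ : Fin M → Matrix (B × C) (B × C) ℂ}
    {σ₁ : Fin M → Matrix (A' × B') (A' × B') ℂ} {σ₂ : Fin M → Matrix (B' × C') (B' × C') ℂ}
    (hW : IsWitness G₁ G₂ σ₁ σ₂ 𝓔₁ 𝓔₂) (h₁ : IsChannel 𝓔₁) (h₂ : IsChannel 𝓔₂) :
    HasDiscriminationTask 𝓔₁ 𝓔₂ := by
  obtain ⟨hG₁, hG₂, hσ₁, hσ₂, hlt⟩ := hW
  set c : ℝ := 1 + ∑ i, ‖G₁ i‖ + ∑ i, ‖G₂ i‖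
  have hnorm₁ : ∀ i, ‖G₁ i‖ < c := fun i => by
    have := Finset.single_le_sum (fun j _ => norm_nonneg (G₁ j)) (Finset.mem_univ i)
    linarith [Finset.sum_nonneg fun j (_ : j ∈ Finset.univ) => norm_nonneg (G₂ j)]
  have hnorm₂ : ∀ i, ‖G₂ i‖ < c := fun i => by
    have := Finset.single_le_sum (fun j _ => norm_nonneg (G₂ j)) (Finset.mem_univ i)
    linarith [Finset.sum_nonneg fun j (_ : j ∈ Finset.univ) => norm_nonneg (G₁ j)]
  have hc : 0 < c := (norm_nonneg _).trans_lt (hnorm₁ ⟨0, hM⟩)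
  have hvalue : ∀ 𝓛₁ 𝓛₂, IsChannel 𝓛₁ → IsChannel 𝓛₂ →
      successProbability (1 / 2) (1 / 2) (biasedWeights M) (biasedWeights M)
        (Fin.append σ₁ σ₁) (Fin.append σ₂ σ₂) (shiftedPOVM M c G₁) (shiftedPOVM M c G₂) 𝓛₁ 𝓛₂ =
      (2 * M : ℝ)⁻¹ + (12 * M ^ 2 * c : ℝ)⁻¹ * (witnessValue G₁ σ₁ 𝓛₁ + witnessValue G₂ σ₂ 𝓛₂) := by
    intro 𝓛₁ 𝓛₂ hL₁ hL₂
    rw [successProbability,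
      sum_biasedWeights_mul_shiftedPOVM hM hc _ _ _ fun i => hL₁.trace_apply_of_isState (hσ₁ i),
      sum_biasedWeights_mul_shiftedPOVM hM hc _ _ _ fun i => hL₂.trace_apply_of_isState (hσ₂ i)]
    field_simp
    ring
  refine ⟨1 / 2, 1 / 2, by norm_num, by norm_num, by norm_num, M + M, M + M, by omega, by omega,
    biasedWeights M, biasedWeights M, biasedWeights_pos hM, biasedWeights_pos hM,
    sum_biasedWeights hM, sum_biasedWeights hM, Fin.append σ₁ σ₁, Fin.append σ₂ σ₂, ?_, ?_,
    shiftedPOVM M c G₁, shiftedPOVM M c G₂, shiftedPOVM_posDef hG₁ hnorm₁,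
    shiftedPOVM_posDef hG₂ hnorm₂, sum_shiftedPOVM hM hc G₁, sum_shiftedPOVM hM hc G₂,
    fun 𝓛₁ 𝓛₂ hL₁ hL₂ hcomp => ?_⟩
  · simpa only [Fin.forall_fin_add, Fin.append_left, Fin.append_right] using ⟨hσ₁, hσ₁⟩
  · simpa only [Fin.forall_fin_add, Fin.append_left, Fin.append_right] using ⟨hσ₂, hσ₂⟩
  · rw [hvalue _ _ hL₁ hL₂, hvalue _ _ h₁ h₂]
    have hκ : 0 < (12 * M ^ 2 * c : ℝ)⁻¹ := by positivity
    exact add_lt_add_right (mul_lt_mul_of_pos_left (hlt 𝓛₁ 𝓛₂ hL₁ hL₂ hcomp) hκ) _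

end Compatibility

theorem witness_iff_discrimination_task_general
    {A A' B B' C C' : Type*}
    [Fintype A] [DecidableEq A] [Fintype A'] [DecidableEq A'] [Nonempty A']
    [Fintype B] [DecidableEq B] [Fintype B'] [DecidableEq B'] [Nonempty B']
    [Fintype C] [DecidableEq C] [Fintype C'] [DecidableEq C'] [Nonempty C']
    (𝓔₁ : Matrix (A' × B') (A' × B') ℂ →ₗ[ℂ] Matrix (A × B) (A × B) ℂ)
    (𝓔₂ : Matrix (B' × C') (B' × C') ℂ →ₗ[ℂ] Matrix (B × C) (B × C) ℂ)
    (h₁ : IsChannel 𝓔₁) (h₂ : IsChannel 𝓔₂) :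
    (∃ (N : ℕ) (H₁ : Fin N → Matrix (A × B) (A × B) ℂ)
        (H₂ : Fin N → Matrix (B × C) (B × C) ℂ)
        (ρ₁ : Fin N → Matrix (A' × B') (A' × B') ℂ)
        (ρ₂ : Fin N → Matrix (B' × C') (B' × C') ℂ),
        (∀ i, (H₁ i).IsHermitian) ∧ (∀ i, (H₂ i).IsHermitian) ∧
        (∀ i, IsState (ρ₁ i)) ∧ (∀ i, IsState (ρ₂ i)) ∧
        ∀ (𝓛₁ : Matrix (A' × B') (A' × B') ℂ →ₗ[ℂ] Matrix (A × B) (A × B) ℂ)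
          (𝓛₂ : Matrix (B' × C') (B' × C') ℂ →ₗ[ℂ] Matrix (B × C) (B × C) ℂ),
          IsChannel 𝓛₁ → IsChannel 𝓛₂ → Compatible 𝓛₁ 𝓛₂ →
          (∑ i, ((H₁ i * 𝓛₁ (ρ₁ i)).trace).re) + (∑ i, ((H₂ i * 𝓛₂ (ρ₂ i)).trace).re) <
            (∑ i, ((H₁ i * 𝓔₁ (ρ₁ i)).trace).re) + (∑ i, ((H₂ i * 𝓔₂ (ρ₂ i)).trace).re)) ↔
    (∃ (p₁ p₂ : ℝ), 0 < p₁ ∧ 0 < p₂ ∧ p₁ + p₂ = 1 ∧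
      ∃ (n₁ n₂ : ℕ), 0 < n₁ ∧ 0 < n₂ ∧
      ∃ (q₁ : Fin n₁ → ℝ) (q₂ : Fin n₂ → ℝ),
        (∀ i, 0 < q₁ i) ∧ (∀ j, 0 < q₂ j) ∧ (∑ i, q₁ i) = 1 ∧ (∑ j, q₂ j) = 1 ∧
      ∃ (ρ₁ : Fin n₁ → Matrix (A' × B') (A' × B') ℂ)
        (ρ₂ : Fin n₂ → Matrix (B' × C') (B' × C') ℂ),
        (∀ i, IsState (ρ₁ i)) ∧ (∀ j, IsState (ρ₂ j)) ∧
      ∃ (M₁ : Fin n₁ → Matrix (A × B) (A × B) ℂ)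
        (M₂ : Fin n₂ → Matrix (B × C) (B × C) ℂ),
        (∀ i, (M₁ i).PosDef) ∧ (∀ j, (M₂ j).PosDef) ∧
        (∑ i, M₁ i) = 1 ∧ (∑ j, M₂ j) = 1 ∧
        ∀ (𝓛₁ : Matrix (A' × B') (A' × B') ℂ →ₗ[ℂ] Matrix (A × B) (A × B) ℂ)
          (𝓛₂ : Matrix (B' × C') (B' × C') ℂ →ₗ[ℂ] Matrix (B × C) (B × C) ℂ),
          IsChannel 𝓛₁ → IsChannel 𝓛₂ → Compatible 𝓛₁ 𝓛₂ →
          p₁ * (∑ i, q₁ i * ((M₁ i * 𝓛₁ (ρ₁ i)).trace).re) +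
              p₂ * (∑ j, q₂ j * ((M₂ j * 𝓛₂ (ρ₂ j)).trace).re) <
            p₁ * (∑ i, q₁ i * ((M₁ i * 𝓔₁ (ρ₁ i)).trace).re) +
              p₂ * (∑ j, q₂ j * ((M₂ j * 𝓔₂ (ρ₂ j)).trace).re)) := by
  constructor
  · rintro ⟨N, H₁, H₂, ρ₁, ρ₂, hW⟩
    obtain ⟨σ₁, hσ₁⟩ := exists_isState (A' × B')
    obtain ⟨σ₂, hσ₂⟩ := exists_isState (B' × C')
    exact (IsWitness.append_zero (l := 1) hW (fun _ => hσ₁) (fun _ => hσ₂)).hasDiscriminationTask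
      N.succ_pos h₁ h₂
  · exact HasDiscriminationTask.exists_isWitness

/-- Theorem 3 of the appendix: a finite Hermitian-operator witness for `𝓔₁, 𝓔₂` against
all compatible pairs exists iff a strictly positive ensemble state discrimination task
exists in which `𝓔₁, 𝓔₂` strictly outperform every compatible pair. -/
theorem witness_iff_discrimination_task
    {A A' B B' C C' : Type*}
    [Fintype A] [DecidableEq A] [Nonempty A] [Fintype A'] [DecidableEq A'] [Nonempty A']
    [Fintype B] [DecidableEq B] [Nonempty B] [Fintype B'] [DecidableEq B'] [Nonempty B']
    [Fintype C] [DecidableEq C] [Nonempty C] [Fintype C'] [DecidableEq C'] [Nonempty C']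
    (𝓔₁ : Matrix (A' × B') (A' × B') ℂ →ₗ[ℂ] Matrix (A × B) (A × B) ℂ)
    (𝓔₂ : Matrix (B' × C') (B' × C') ℂ →ₗ[ℂ] Matrix (B × C) (B × C) ℂ)
    (h₁ : IsChannel 𝓔₁) (h₂ : IsChannel 𝓔₂) :
    (∃ (N : ℕ) (H₁ : Fin N → Matrix (A × B) (A × B) ℂ)
        (H₂ : Fin N → Matrix (B × C) (B × C) ℂ)
        (ρ₁ : Fin N → Matrix (A' × B') (A' × B') ℂ)
        (ρ₂ : Fin N → Matrix (B' × C') (B' × C') ℂ),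
        (∀ i, (H₁ i).IsHermitian) ∧ (∀ i, (H₂ i).IsHermitian) ∧
        (∀ i, IsState (ρ₁ i)) ∧ (∀ i, IsState (ρ₂ i)) ∧
        ∀ (𝓛₁ : Matrix (A' × B') (A' × B') ℂ →ₗ[ℂ] Matrix (A × B) (A × B) ℂ)
          (𝓛₂ : Matrix (B' × C') (B' × C') ℂ →ₗ[ℂ] Matrix (B × C) (B × C) ℂ),
          IsChannel 𝓛₁ → IsChannel 𝓛₂ → Compatible 𝓛₁ 𝓛₂ →
          (∑ i, ((H₁ i * 𝓛₁ (ρ₁ i)).trace).re) + (∑ i, ((H₂ i * 𝓛₂ (ρ₂ i)).trace).re) <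
            (∑ i, ((H₁ i * 𝓔₁ (ρ₁ i)).trace).re) + (∑ i, ((H₂ i * 𝓔₂ (ρ₂ i)).trace).re)) ↔
    (∃ (p₁ p₂ : ℝ), 0 < p₁ ∧ 0 < p₂ ∧ p₁ + p₂ = 1 ∧
      ∃ (n₁ n₂ : ℕ), 0 < n₁ ∧ 0 < n₂ ∧
      ∃ (q₁ : Fin n₁ → ℝ) (q₂ : Fin n₂ → ℝ),
        (∀ i, 0 < q₁ i) ∧ (∀ j, 0 < q₂ j) ∧ (∑ i, q₁ i) = 1 ∧ (∑ j, q₂ j) = 1 ∧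
      ∃ (ρ₁ : Fin n₁ → Matrix (A' × B') (A' × B') ℂ)
        (ρ₂ : Fin n₂ → Matrix (B' × C') (B' × C') ℂ),
        (∀ i, IsState (ρ₁ i)) ∧ (∀ j, IsState (ρ₂ j)) ∧
      ∃ (M₁ : Fin n₁ → Matrix (A × B) (A × B) ℂ)
        (M₂ : Fin n₂ → Matrix (B × C) (B × C) ℂ),
        (∀ i, (M₁ i).PosDef) ∧ (∀ j, (M₂ j).PosDef) ∧
        (∑ i, M₁ i) = 1 ∧ (∑ j, M₂ j) = 1 ∧
        ∀ (𝓛₁ : Matrix (A' × B') (A' × B') ℂ →ₗ[ℂ] Matrix (A × B) (A × B) ℂ)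
          (𝓛₂ : Matrix (B' × C') (B' × C') ℂ →ₗ[ℂ] Matrix (B × C) (B × C) ℂ),
          IsChannel 𝓛₁ → IsChannel 𝓛₂ → Compatible 𝓛₁ 𝓛₂ →
          p₁ * (∑ i, q₁ i * ((M₁ i * 𝓛₁ (ρ₁ i)).trace).re) +
              p₂ * (∑ j, q₂ j * ((M₂ j * 𝓛₂ (ρ₂ j)).trace).re) <
            p₁ * (∑ i, q₁ i * ((M₁ i * 𝓔₁ (ρ₁ i)).trace).re) +
              p₂ * (∑ j, q₂ j * ((M₂ j * 𝓔₂ (ρ₂ j)).trace).re)) :=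
  witness_iff_discrimination_task_general 𝓔₁ 𝓔₂ h₁ h₂
end
end

section
/- (Monogamy of pure-state sharing) Let X and Y be nonempty finite types and let φ : X × Y → ℂ be a unit vector. There exists a quantum state ρ on X × Y × X such that the partial trace of ρ over the third factor equals |φ⟩⟨φ| (as a matrix on X × Y) and the partial trace of ρ over the first factor, after the swap reindexing Y × X ≃ X × Y, equals |φ⟩⟨φ|, if and only if φ is a product vector: there exist ψ : X → ℂ and ξ : Y → ℂ with φ (x,y) = ψ x * ξ y for all x, y. -/
/-!
If the `XY`-marginal of a state `ρ` on `X × Y × X` is the pure state `|φ⟩⟨φ|`, then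
`tr (ρ (|φ⟩⟨φ| ⊗ 1)) = ⟨φ|φ⟩⟨φ|φ⟩ = tr ρ`, so `ρ` lives on the range of the projection
`|φ⟩⟨φ| ⊗ 1` and `ρ = |φ⟩⟨φ| ⊗ σ`. Its `YX`-marginal is then
`tr_X |φ⟩⟨φ| ⊗ σ`; equating it with `|φ⟩⟨φ|` and evaluating at a fixed nonzero entry `φ (x₀, y₀)`
factors `φ`. Conversely, for `φ = ψ ⊗ ξ` the pure state of `ψ ⊗ ξ ⊗ ψ / ‖ψ‖` has both marginals
equal to `|φ⟩⟨φ|`.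
-/

open Matrix Kronecker
open scoped ComplexOrder

noncomputable section

/-- Outer product `|v⟩⟨v|` of a vector. -/
def outer {n : Type*} (v : n → ℂ) : Matrix n n ℂ :=
  Matrix.of fun i j => v i * (starRingEnd ℂ) (v j)

section Outer

variable {n : Type*}

theorem outer_eq_vecMulVec (v : n → ℂ) : outer v = vecMulVec v (star v) := rfl

theorem outer_submatrix {m : Type*} (v : n → ℂ) (e : m → n) :
    (outer v).submatrix e e = outer (v ∘ e) := rfl

variable [Fintype n]

theorem outer_posSemidef (v : n → ℂ) : (outer v).PosSemidef :=
  posSemidef_vecMulVec_self_star v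

theorem trace_outer (v : n → ℂ) : (outer v).trace = ((∑ i, ‖v i‖ ^ 2 : ℝ) : ℂ) := by
  simp [Matrix.trace, outer, Complex.mul_conj, Complex.normSq_eq_norm_sq]

theorem outer_mul_self {v : n → ℂ} (hv : ∑ i, ‖v i‖ ^ 2 = 1) : outer v * outer v = outer v := by
  have : star v ⬝ᵥ v = 1 := by
    simpa [dotProduct, mul_comm, Complex.mul_conj, Complex.normSq_eq_norm_sq] using
      congrArg ((↑) : ℝ → ℂ) hv
  rw [outer_eq_vecMulVec, vecMulVec_mul_vecMulVec, this, one_smul]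

end Outer

open scoped MatrixOrder in
theorem Matrix.PosSemidef.mul_eq_zero_of_trace_conjTranspose_mul_mul_eq_zero
    {𝕜 n m : Type*} [RCLike 𝕜] [Fintype n] [Fintype m] {A : Matrix n n 𝕜} (hA : A.PosSemidef)
    {B : Matrix n m 𝕜} (h : (Bᴴ * A * B).trace = 0) : A * B = 0 := by
  classical
  obtain ⟨C, rfl⟩ := CStarAlgebra.nonneg_iff_eq_star_mul_self.mp hA.nonneg
  rw [star_eq_conjTranspose, show Bᴴ * (Cᴴ * C) * B = (C * B)ᴴ * (C * B) by
    simp only [conjTranspose_mul, Matrix.mul_assoc], trace_conjTranspose_mul_self_eq_zero_iff] at h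
  rw [Matrix.mul_assoc, h, Matrix.mul_zero]

section PartialTrace

variable {a b c : Type*} [Fintype c]

theorem trR_submatrix_prodAssoc (ρ : Matrix (a × b × c) (a × b × c) ℂ) :
    trR (ρ.submatrix (Equiv.prodAssoc a b c) (Equiv.prodAssoc a b c)) = trC3 ρ := rfl

theorem trC3_outer_mul (φ : a × b → ℂ) (w : c → ℂ) :
    trC3 (outer fun t : a × b × c => φ (t.1, t.2.1) * w t.2.2) =
      ((∑ k, ‖w k‖ ^ 2 : ℝ) : ℂ) • outer φ := by
  ext i j
  push_cast
  simp only [trC3, outer, Matrix.of_apply, Matrix.smul_apply, smul_eq_mul, map_mul, Finset.sum_mul]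
  refine Finset.sum_congr rfl fun k _ => ?_
  rw [← Complex.mul_conj']
  ring

variable [Fintype a]

theorem trL_outer_mul (u : a → ℂ) (v : b → ℂ) :
    trL (outer fun p : a × b => u p.1 * v p.2) = ((∑ i, ‖u i‖ ^ 2 : ℝ) : ℂ) • outer v := by
  ext i j
  push_cast
  simp only [trL, outer, Matrix.of_apply, Matrix.smul_apply, smul_eq_mul, map_mul, Finset.sum_mul]
  refine Finset.sum_congr rfl fun k _ => ?_
  rw [← Complex.mul_conj']
  ring

theorem trace_trR (ρ : Matrix (a × c) (a × c) ℂ) : (trR ρ).trace = ρ.trace := by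
  simp [Matrix.trace, trR, Fintype.sum_prod_type]

theorem trace_mul_kronecker_one [DecidableEq c] (ρ : Matrix (a × c) (a × c) ℂ)
    (M : Matrix a a ℂ) : (ρ * (M ⊗ₖ (1 : Matrix c c ℂ))).trace = (trR ρ * M).trace := by
  simp only [Matrix.trace, Matrix.diag, Matrix.mul_apply, trR, Matrix.of_apply, kroneckerMap_apply,
    Matrix.one_apply, Fintype.sum_prod_type, mul_ite, mul_one, mul_zero,
    Finset.sum_ite_eq', Finset.mem_univ, if_true, Finset.sum_mul]
  exact Finset.sum_congr rfl fun _ _ => Finset.sum_comm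

theorem vecMulVec_kronecker_one_mul_mul [DecidableEq c] (u v w x : a → ℂ)
    (ρ : Matrix (a × c) (a × c) ℂ) :
    (vecMulVec u v ⊗ₖ (1 : Matrix c c ℂ)) * ρ * (vecMulVec w x ⊗ₖ (1 : Matrix c c ℂ)) =
      vecMulVec u x ⊗ₖ Matrix.of fun k l => ∑ i, ∑ j, v i * ρ (i, k) (j, l) * w j := by
  ext ⟨i, k⟩ ⟨j, l⟩
  simp only [Matrix.mul_apply, kroneckerMap_apply, vecMulVec_apply, Matrix.one_apply,
    Matrix.of_apply, Fintype.sum_prod_type, mul_ite, ite_mul, mul_one, mul_zero, zero_mul,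
    Finset.sum_ite_eq, Finset.sum_ite_eq', Finset.mem_univ, if_true, Finset.sum_mul, Finset.mul_sum]
  rw [Finset.sum_comm]
  refine Finset.sum_congr rfl fun _ _ => Finset.sum_congr rfl fun _ _ => by ring

variable [Fintype b]

theorem trace_trC3 (ρ : Matrix (a × b × c) (a × b × c) ℂ) : (trC3 ρ).trace = ρ.trace := by
  simp [Matrix.trace, trC3, Fintype.sum_prod_type]

end PartialTrace

theorem Matrix.PosSemidef.mul_eq_self_of_trace_mul_eq_trace {𝕜 n : Type*} [RCLike 𝕜] [Fintype n]
    {ρ P : Matrix n n 𝕜} (hρ : ρ.PosSemidef) (hP : Pᴴ = P) (hPP : P * P = P)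
    (h : (ρ * P).trace = ρ.trace) : ρ * P = ρ := by
  classical
  have hQ : (1 - P) * (1 - P)ᴴ = 1 - P := by
    rw [conjTranspose_sub, conjTranspose_one, hP, Matrix.sub_mul, Matrix.mul_sub, Matrix.mul_sub,
      hPP, Matrix.one_mul, Matrix.mul_one, Matrix.one_mul, sub_self, sub_zero]
  have hρQ : ρ * (1 - P) = 0 := by
    refine hρ.mul_eq_zero_of_trace_conjTranspose_mul_mul_eq_zero ?_
    rw [Matrix.trace_mul_cycle, hQ, Matrix.trace_mul_comm, Matrix.mul_sub,
      Matrix.mul_one, trace_sub, h, sub_self]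
  rwa [Matrix.mul_sub, Matrix.mul_one, sub_eq_zero, eq_comm] at hρQ

theorem exists_eq_outer_kronecker_of_trR_eq_outer {a c : Type*} [Fintype a] [Fintype c]
    {ρ : Matrix (a × c) (a × c) ℂ} (hρ : ρ.PosSemidef) {φ : a → ℂ} (hφ : ∑ i, ‖φ i‖ ^ 2 = 1)
    (h : trR ρ = outer φ) : ∃ σ : Matrix c c ℂ, ρ = outer φ ⊗ₖ σ := by
  classical
  set P := outer φ ⊗ₖ (1 : Matrix c c ℂ)
  have hP : Pᴴ = P := by
    rw [conjTranspose_kronecker, (outer_posSemidef φ).1.eq, conjTranspose_one]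
  have hPP : P * P = P := by rw [← mul_kronecker_mul, outer_mul_self hφ, Matrix.one_mul]
  have htr : (ρ * P).trace = ρ.trace := by
    rw [trace_mul_kronecker_one, h, outer_mul_self hφ, ← h, trace_trR]
  have hρP : ρ * P = ρ := hρ.mul_eq_self_of_trace_mul_eq_trace hP hPP htr
  have hPρ : P * ρ = ρ := by
    simpa only [conjTranspose_mul, hP, hρ.1.eq] using congrArg conjTranspose hρP
  have hcompress : ρ = P * ρ * P := by rw [Matrix.mul_assoc, hρP, hPρ]
  exact ⟨_, hcompress.trans (vecMulVec_kronecker_one_mul_mul φ (star φ) φ (star φ) ρ)⟩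

section UnitVector

variable {ι : Type*} [Fintype ι] {v : ι → ℂ}

theorem exists_ne_zero_of_sum_norm_sq_eq_one (hv : ∑ i, ‖v i‖ ^ 2 = 1) : ∃ i, v i ≠ 0 := by
  by_contra! h
  simp [h] at hv

theorem exists_sum_norm_sq_mul_eq_one (hv : v ≠ 0) : ∃ c : ℂ, ∑ i, ‖c * v i‖ ^ 2 = 1 := by
  obtain ⟨i, hi⟩ := Function.ne_iff.1 hv
  have hs : 0 < ∑ i, ‖v i‖ ^ 2 :=
    Finset.sum_pos' (fun _ _ => by positivity) ⟨i, Finset.mem_univ _, pow_pos (norm_pos_iff.2 hi) 2⟩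
  refine ⟨((Real.sqrt (∑ i, ‖v i‖ ^ 2))⁻¹ : ℝ), ?_⟩
  simp only [norm_mul, mul_pow, ← Finset.mul_sum, Complex.norm_real, Real.norm_eq_abs, sq_abs,
    inv_pow, Real.sq_sqrt hs.le]
  exact inv_mul_cancel₀ hs.ne'

end UnitVector

theorem exists_eq_mul_of_symmetric_extension {X Y : Type*} [Fintype X] [Fintype Y] {φ : X × Y → ℂ}
    (hφ : ∑ p, ‖φ p‖ ^ 2 = 1) {ρ : Matrix (X × Y × X) (X × Y × X) ℂ} (hρ : ρ.PosSemidef)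
    (h₁ : trC3 ρ = outer φ) (h₂ : (trL ρ).submatrix Prod.swap Prod.swap = outer φ) :
    ∃ (ψ : X → ℂ) (ξ : Y → ℂ), ∀ x y, φ (x, y) = ψ x * ξ y := by
  obtain ⟨σ, hσ⟩ := exists_eq_outer_kronecker_of_trR_eq_outer (hρ.submatrix _) hφ
    ((trR_submatrix_prodAssoc ρ).trans h₁)
  have hmarg : ∀ x y x' y', φ (x, y) * starRingEnd ℂ (φ (x', y')) =
      σ x x' * ∑ k, φ (k, y) * starRingEnd ℂ (φ (k, y')) := by
    intro x y x' y'
    have hρ_apply : ∀ k, ρ (k, y, x) (k, y', x') = φ (k, y) * starRingEnd ℂ (φ (k, y')) * σ x x' :=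
      fun k => congrFun (congrFun hσ ((k, y), x)) ((k, y'), x')
    have hentry := congrFun (congrFun h₂ (x, y)) (x', y')
    simp only [Matrix.submatrix_apply, trL, outer, Matrix.of_apply, Prod.swap_prod_mk,
      hρ_apply] at hentry
    rw [← hentry, Finset.mul_sum]
    exact Finset.sum_congr rfl fun _ _ => mul_comm _ _
  obtain ⟨⟨x₀, y₀⟩, hp₀⟩ := exists_ne_zero_of_sum_norm_sq_eq_one hφ
  refine ⟨fun x => σ x x₀ / starRingEnd ℂ (φ (x₀, y₀)),
    fun y => ∑ k, φ (k, y) * starRingEnd ℂ (φ (k, y₀)), fun x y => ?_⟩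
  rw [div_mul_eq_mul_div, ← hmarg, mul_div_assoc, div_self (by simpa using hp₀), mul_one]

theorem exists_symmetric_extension_of_eq_mul {X Y : Type*} [Fintype X] [Fintype Y] {φ : X × Y → ℂ}
    (hφ : ∑ p, ‖φ p‖ ^ 2 = 1) {ψ : X → ℂ} {ξ : Y → ℂ} (h : ∀ x y, φ (x, y) = ψ x * ξ y) :
    ∃ ρ : Matrix (X × Y × X) (X × Y × X) ℂ, IsState ρ ∧ trC3 ρ = outer φ ∧
      (trL ρ).submatrix Prod.swap Prod.swap = outer φ := by
  obtain ⟨⟨x₀, y₀⟩, hp₀⟩ := exists_ne_zero_of_sum_norm_sq_eq_one hφ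
  have hψ : ψ ≠ 0 := fun h0 => hp₀ (by rw [h, h0, Pi.zero_apply, zero_mul])
  obtain ⟨c, hc⟩ := exists_sum_norm_sq_mul_eq_one hψ
  set w := fun k => c * ψ k
  have hsym : (fun t : X × Y × X => φ (t.1, t.2.1) * w t.2.2) =
      fun t => w t.1 * φ (t.2.2, t.2.1) := by
    funext t
    simp only [h, w]
    ring
  have hC : trC3 (outer fun t : X × Y × X => φ (t.1, t.2.1) * w t.2.2) = outer φ := by
    rw [trC3_outer_mul, hc, Complex.ofReal_one, one_smul]
  refine ⟨_, ⟨outer_posSemidef _, ?_⟩, hC, ?_⟩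
  · rw [← trace_trC3, hC, trace_outer, hφ, Complex.ofReal_one]
  · rw [hsym, trL_outer_mul w fun q : Y × X => φ (q.2, q.1), hc, Complex.ofReal_one, one_smul,
      outer_submatrix]
    rfl

theorem pure_state_sharing_iff_product_general
    {X Y : Type*} [Fintype X]
    [Fintype Y]
    (φ : X × Y → ℂ) (hunit : ∑ p, ‖φ p‖ ^ 2 = 1) :
    (∃ ρ : Matrix (X × Y × X) (X × Y × X) ℂ, IsState ρ ∧
        trC3 ρ = outer φ ∧
        (trL ρ).submatrix Prod.swap Prod.swap = outer φ) ↔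
      ∃ (ψ : X → ℂ) (ξ : Y → ℂ), ∀ (x : X) (y : Y), φ (x, y) = ψ x * ξ y :=
  ⟨fun ⟨_, ⟨hρ, _⟩, h₁, h₂⟩ => exists_eq_mul_of_symmetric_extension hunit hρ h₁ h₂,
    fun ⟨_, _, h⟩ => exists_symmetric_extension_of_eq_mul hunit h⟩

/-- Monogamy of pure-state sharing: a pure state `|φ⟩⟨φ|` on `X × Y` can be shared
symmetrically by two parties (as the `XY` and `YX` marginals of a tripartite state on
`X × Y × X`) iff `φ` is a product vector. -/
theorem pure_state_sharing_iff_product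
    {X Y : Type*} [Fintype X] [DecidableEq X] [Nonempty X]
    [Fintype Y] [DecidableEq Y] [Nonempty Y]
    (φ : X × Y → ℂ) (hunit : ∑ p, ‖φ p‖ ^ 2 = 1) :
    (∃ ρ : Matrix (X × Y × X) (X × Y × X) ℂ, IsState ρ ∧
        trC3 ρ = outer φ ∧
        (trL ρ).submatrix Prod.swap Prod.swap = outer φ) ↔
      ∃ (ψ : X → ℂ) (ξ : Y → ℂ), ∀ (x : X) (y : Y), φ (x, y) = ψ x * ξ y :=
  pure_state_sharing_iff_product_general φ hunit
end
end

section
/- (No global classical channel for three PR-boxes) Define PR : ZMod 2 → ZMod 2 → ZMod 2 → ZMod 2 → ℝ by PR a b x y := if a + b = x * y then 1/2 else 0. There exists NO function P : ZMod 2 → ZMod 2 → ZMod 2 → ZMod 2 → ZMod 2 → ZMod 2 → ℝ (read P a b c x y z) with all values nonnegative and ∑ a, ∑ b, ∑ c, P a b c x y z = 1 for all x, y, z, such that simultaneously: ∑ c, P a b c x y z = PR a b x y for all a, b, x, y, z; ∑ b, P a b c x y z = PR a c x z for all a, c, x, y, z; and ∑ a, P a b c x y z = PR b c y z for all b, c,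 x, y, z. -/
open Finset

/-- Three pairwise PR-boxes admit no global classical channel: there is no tripartite
conditional distribution whose three two-party marginals are all PR-boxes. -/
theorem no_global_channel_for_three_PR_boxes
    (PR : ZMod 2 → ZMod 2 → ZMod 2 → ZMod 2 → ℝ)
    (hPR : ∀ a b x y, PR a b x y = if a + b = x * y then 1 / 2 else 0) :
    ¬ ∃ P : ZMod 2 → ZMod 2 → ZMod 2 → ZMod 2 → ZMod 2 → ZMod 2 → ℝ,
        (∀ a b c x y z, 0 ≤ P a b c x y z) ∧
        (∀ x y z, ∑ a, ∑ b, ∑ c, P a b c x y z = 1) ∧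
        (∀ a b x y z, ∑ c, P a b c x y z = PR a b x y) ∧
        (∀ a c x y z, ∑ b, P a b c x y z = PR a c x z) ∧
        (∀ b c x y z, ∑ a, P a b c x y z = PR b c y z) := by
  rintro ⟨P, hpos, hsum, hAB, hAC, hBC⟩
  have key : ∀ a b c : ZMod 2, P a b c 1 1 1 = 0 := by
    intro a b c
    have hcase : ∀ a b c : ZMod 2, a + b ≠ 1 ∨ a + c ≠ 1 ∨ b + c ≠ 1 := by decide
    rcases hcase a b c with h | h | h
    · have hz : ∑ c', P a b c' 1 1 1 = 0 := by
        rw [hAB, hPR]; simp [h]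
      exact (Finset.sum_eq_zero_iff_of_nonneg (fun i _ => hpos a b i 1 1 1)).mp hz c
        (Finset.mem_univ c)
    · have hz : ∑ b', P a b' c 1 1 1 = 0 := by
        rw [hAC, hPR]; simp [h]
      exact (Finset.sum_eq_zero_iff_of_nonneg (fun i _ => hpos a i c 1 1 1)).mp hz b
        (Finset.mem_univ b)
    · have hz : ∑ a', P a' b c 1 1 1 = 0 := by
        rw [hBC, hPR]; simp [h]
      exact (Finset.sum_eq_zero_iff_of_nonneg (fun i _ => hpos i b c 1 1 1)).mp hz a
        (Finset.mem_univ a)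
  have h1 := hsum 1 1 1
  simp [key] at h1
end

section
/- (Well-defined two-party marginals force no-signaling) Let A, B, C, X, Y, Z be nonempty finite types and let P : A → B → C → X → Y → Z → ℝ be a classical channel: all values nonnegative and ∑ a, ∑ b, ∑ c, P a b c x y z = 1 for all x, y, z. Suppose all three two-party marginals are well-defined: there exist Q_AB : A → B → X → Y → ℝ with ∑ c, P a b c x y z = Q_AB a b x y for all z; Q_AC : A → C → X → Z → ℝ with ∑ b, P a b c x y z = Q_AC a c x z for all y; and Q_BC : B → C → Y → Z → ℝ with ∑ a, P a b c x y z = Q_BC b c y z for all x. Then P is no-signaling: there exist R_A : A → X → ℝ, R_B : B → Y → ℝ, R_C : C → Z → ℝ such that ∑ b, ∑ c, P a b c x y z = R_A a x for all y, z; ∑ a, ∑ c, P a b c x y z = R_B b y for all x, z; and ∑ a, ∑ b, P a b c x y z = R_C c z for all x, y. -/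
open Finset

/-- If a tripartite classical channel has all three two-party marginals well-defined,
then it is no-signaling: all single-party marginals are well-defined. -/
theorem two_party_marginals_force_no_signaling
    {A B C X Y Z : Type*}
    [Fintype A] [Nonempty A] [Fintype B] [Nonempty B] [Fintype C] [Nonempty C]
    [Fintype X] [Nonempty X] [Fintype Y] [Nonempty Y] [Fintype Z] [Nonempty Z]
    (P : A → B → C → X → Y → Z → ℝ)
    (hpos : ∀ a b c x y z, 0 ≤ P a b c x y z)
    (hsum : ∀ x y z, ∑ a, ∑ b, ∑ c, P a b c x y z = 1)
    (QAB : A → B → X → Y → ℝ) (hAB : ∀ a b x y z, ∑ c, P a b c x y z = QAB a b x y)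
    (QAC : A → C → X → Z → ℝ) (hAC : ∀ a c x y z, ∑ b, P a b c x y z = QAC a c x z)
    (QBC : B → C → Y → Z → ℝ) (hBC : ∀ b c x y z, ∑ a, P a b c x y z = QBC b c y z) :
    ∃ (RA : A → X → ℝ) (RB : B → Y → ℝ) (RC : C → Z → ℝ),
      (∀ a x y z, ∑ b, ∑ c, P a b c x y z = RA a x) ∧
      (∀ b x y z, ∑ a, ∑ c, P a b c x y z = RB b y) ∧
      (∀ c x y z, ∑ a, ∑ b, P a b c x y z = RC c z) := by
  obtain ⟨y₀⟩ := ‹Nonempty Y›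
  obtain ⟨z₀⟩ := ‹Nonempty Z›
  obtain ⟨x₀⟩ := ‹Nonempty X›
  refine ⟨fun a x => ∑ b, ∑ c, P a b c x y₀ z₀,
          fun b y => ∑ a, ∑ c, P a b c x₀ y z₀,
          fun c z => ∑ a, ∑ b, P a b c x₀ y₀ z, ?_, ?_, ?_⟩
  · intro a x y z
    calc ∑ b, ∑ c, P a b c x y z = ∑ b, QAB a b x y := by simp [hAB]
    _ = ∑ b, ∑ c, P a b c x y z₀ := by simp [hAB]
    _ = ∑ c, ∑ b, P a b c x y z₀ := Finset.sum_comm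
    _ = ∑ c, QAC a c x z₀ := by simp [hAC]
    _ = ∑ c, ∑ b, P a b c x y₀ z₀ := by simp [hAC]
    _ = ∑ b, ∑ c, P a b c x y₀ z₀ := Finset.sum_comm
  · intro b x y z
    calc ∑ a, ∑ c, P a b c x y z = ∑ a, QAB a b x y := by simp [hAB]
    _ = ∑ a, ∑ c, P a b c x y z₀ := by simp [hAB]
    _ = ∑ c, ∑ a, P a b c x y z₀ := Finset.sum_comm
    _ = ∑ c, QBC b c y z₀ := by simp [hBC]
    _ = ∑ c, ∑ a, P a b c x₀ y z₀ := by simp [hBC]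
    _ = ∑ a, ∑ c, P a b c x₀ y z₀ := Finset.sum_comm
  · intro c x y z
    calc ∑ a, ∑ b, P a b c x y z = ∑ a, QAC a c x z := by simp [hAC]
    _ = ∑ a, ∑ b, P a b c x y₀ z := by simp [hAC]
    _ = ∑ b, ∑ a, P a b c x y₀ z := Finset.sum_comm
    _ = ∑ b, QBC b c y₀ z := by simp [hBC]
    _ = ∑ b, ∑ a, P a b c x₀ y₀ z := by simp [hBC]
    _ = ∑ a, ∑ b, P a b c x₀ y₀ z := Finset.sum_comm
end
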